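/- (Three-term decomposition of mutual information) Let (X^n, Y^n) be jointly distributed random sequences with finite alphabets. Then I(X^n; Y^n) = I(DX^n→Y^n) + I(DY^n→X^n) + I(X^n→Y^n‖DX^n), i.e., mutual information equals the sum of the two time-shifted directed informations and the instantaneous information. -/

import Mathlib

open Finset

noncomputable section

-- Probability of the event `E` under the pmf `p` on a finite sample space `Ω`.
open Classical in
def pr {Ω : Type*} [Fintype Ω] (p : Ω → ℝ) (E : Ω → Prop) : ℝ :=
  ∑ ω, if E ω then p ω else 0

-- Shannon entropy `H(U)` (pointwise form).
def entropy {Ω α : Type*} [Fintype Ω] (p : Ω → ℝ) (U : Ω → α) : ℝ :=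
  -∑ ω, p ω * Real.log (pr p (fun ω' => U ω' = U ω))

-- Conditional Shannon entropy `H(U | V)`.
def condEntropy {Ω α β : Type*} [Fintype Ω] (p : Ω → ℝ) (U : Ω → α) (V : Ω → β) : ℝ :=
  -∑ ω, p ω * Real.log
      (pr p (fun ω' => U ω' = U ω ∧ V ω' = V ω) / pr p (fun ω' => V ω' = V ω))

-- Mutual information `I(U ; V)`.
def mutualInfo {Ω α β : Type*} [Fintype Ω] (p : Ω → ℝ) (U : Ω → α) (V : Ω → β) : ℝ :=
  ∑ ω, p ω * Real.log
      (pr p (fun ω' => U ω' = U ω ∧ V ω' = V ω) /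
        (pr p (fun ω' => U ω' = U ω) * pr p (fun ω' => V ω' = V ω)))

-- Conditional mutual information `I(U ; V | W)`.
def condMutualInfo {Ω α β γ : Type*} [Fintype Ω] (p : Ω → ℝ)
    (U : Ω → α) (V : Ω → β) (W : Ω → γ) : ℝ :=
  ∑ ω, p ω * Real.log
      ((pr p (fun ω' => U ω' = U ω ∧ V ω' = V ω ∧ W ω' = W ω) *
          pr p (fun ω' => W ω' = W ω)) /
        (pr p (fun ω' => U ω' = U ω ∧ W ω' = W ω) *
          pr p (fun ω' => V ω' = V ω ∧ W ω' = W ω)))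

-- The prefix `(X_0, …, X_{i-1})` of a random sequence `X`.
def prefixSeq {Ω 𝒳 : Type*} (X : Ω → ℕ → 𝒳) (i : ℕ) : Ω → (Fin i → 𝒳) :=
  fun ω j => X ω (j : ℕ)

-- Directed information `I(X^n → Y^n) = ∑_{i=1}^n I(X^i ; Y_i | Y^{i-1})` (0-indexed).
def directedInfo {Ω 𝒳 𝒴 : Type*} [Fintype Ω] (p : Ω → ℝ)
    (X : Ω → ℕ → 𝒳) (Y : Ω → ℕ → 𝒴) (n : ℕ) : ℝ :=
  ∑ i ∈ Finset.range n,
    condMutualInfo p (prefixSeq X (i + 1)) (fun ω => Y ω i) (prefixSeq Y i)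

/-!
Write `J(j, k)` for the probability of the realised prefixes `(x^j, y^k)`. All four information
quantities are expectations of log-ratios of such probabilities, and the three per-step
log-ratios at time `i` add up to `g(i+1) - g(i)` with `g(i) = log (J(i,i) J(0,0) / (J(i,0) J(0,i)))`.
The sum over `i < n` therefore telescopes to `g(n)`, the information density of `I(X^n; Y^n)`,
since `J(0,0) = 1`.
-/

open Real

section Pr

variable {Ω : Type*} [Fintype Ω] (p : Ω → ℝ)

lemma pr_congr {E F : Ω → Prop} (h : ∀ ω, E ω ↔ F ω) : pr p E = pr p F := by
  rw [show E = F from funext fun ω => propext (h ω)]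

lemma pr_true (hp1 : ∑ ω, p ω = 1) : pr p (fun _ => True) = 1 := by
  simp [pr, hp1]

lemma le_pr (hp0 : ∀ ω, 0 ≤ p ω) {E : Ω → Prop} {ω : Ω} (hE : E ω) : p ω ≤ pr p E := by
  classical
  have hle := single_le_sum (f := fun ω => if E ω then p ω else 0)
    (fun ω _ => by split_ifs <;> simp [hp0 ω]) (mem_univ ω)
  simpa [pr, hE] using hle

lemma pr_pos (hp0 : ∀ ω, 0 ≤ p ω) {E : Ω → Prop} {ω : Ω} (hE : E ω) (hω : 0 < p ω) :
    0 < pr p E :=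
  hω.trans_le (le_pr p hp0 hE)

end Pr

lemma log_div_mul {a b c : ℝ} (ha : a ≠ 0) (hb : b ≠ 0) (hc : c ≠ 0) :
    log (a / (b * c)) = log a - log b - log c := by
  rw [log_div ha (mul_ne_zero hb hc), log_mul hb hc]; ring

lemma log_mul_div_mul {a b c d : ℝ} (ha : a ≠ 0) (hb : b ≠ 0) (hc : c ≠ 0) (hd : d ≠ 0) :
    log (a * b / (c * d)) = log a + log b - log c - log d := by
  rw [log_div (mul_ne_zero ha hb) (mul_ne_zero hc hd), log_mul ha hb, log_mul hc hd]; ring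

section InformationDensity

variable {Ω α β γ : Type*} [Fintype Ω] (p : Ω → ℝ) (hp0 : ∀ ω, 0 ≤ p ω)
include hp0

lemma mutualInfo_eq_sum_log (U : Ω → α) (V : Ω → β) :
    mutualInfo p U V = ∑ ω, p ω *
      (log (pr p fun ω' => U ω' = U ω ∧ V ω' = V ω) -
        log (pr p fun ω' => U ω' = U ω) - log (pr p fun ω' => V ω' = V ω)) := by
  refine sum_congr rfl fun ω _ => ?_
  rcases (hp0 ω).eq_or_lt with h | h
  · simp [← h]
  · rw [log_div_mul] <;> exact (pr_pos p hp0 (by simp) h).ne'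

lemma condMutualInfo_eq_sum_log (U : Ω → α) (V : Ω → β) (W : Ω → γ) :
    condMutualInfo p U V W = ∑ ω, p ω *
      (log (pr p fun ω' => U ω' = U ω ∧ V ω' = V ω ∧ W ω' = W ω) +
        log (pr p fun ω' => W ω' = W ω) -
        log (pr p fun ω' => U ω' = U ω ∧ W ω' = W ω) -
        log (pr p fun ω' => V ω' = V ω ∧ W ω' = W ω)) := by
  refine sum_congr rfl fun ω _ => ?_
  rcases (hp0 ω).eq_or_lt with h | h
  · simp [← h]
  · rw [log_mul_div_mul] <;> exact (pr_pos p hp0 (by simp) h).ne'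

end InformationDensity

section Prefix

variable {Ω 𝒳 𝒴 : Type*}

lemma prefixSeq_succ_eq_iff (X : Ω → ℕ → 𝒳) (i : ℕ) (ω' ω : Ω) :
    prefixSeq X (i + 1) ω' = prefixSeq X (i + 1) ω ↔
      prefixSeq X i ω' = prefixSeq X i ω ∧ X ω' i = X ω i := by
  simp only [funext_iff, Fin.forall_fin_succ', prefixSeq, Fin.val_castSucc, Fin.val_last]

variable [Fintype Ω] (p : Ω → ℝ) (X : Ω → ℕ → 𝒳) (Y : Ω → ℕ → 𝒴)

def jointPrefixPr (j k : ℕ) (ω : Ω) : ℝ :=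
  pr p fun ω' => prefixSeq X j ω' = prefixSeq X j ω ∧ prefixSeq Y k ω' = prefixSeq Y k ω

lemma jointPrefixPr_swap (j k : ℕ) (ω : Ω) :
    jointPrefixPr p Y X k j ω = jointPrefixPr p X Y j k ω :=
  pr_congr p fun _ => and_comm

lemma jointPrefixPr_zero_zero (hp1 : ∑ ω, p ω = 1) (ω : Ω) : jointPrefixPr p X Y 0 0 ω = 1 := by
  rw [jointPrefixPr, ← pr_true p hp1]
  exact pr_congr p fun ω' =>
    iff_of_true ⟨Subsingleton.elim _ _, Subsingleton.elim _ _⟩ trivial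

end Prefix

lemma sum_range_staircase {M : Type*} [AddCommGroup M] (L : ℕ → ℕ → M) (n : ℕ) :
    ∑ i ∈ range n,
      ((L i (i + 1) + L 0 i - L i i - L 0 (i + 1)) +
        (L (i + 1) i + L i 0 - L i i - L (i + 1) 0) +
        (L (i + 1) (i + 1) + L i i - L (i + 1) i - L i (i + 1))) =
      L n n + L 0 0 - L n 0 - L 0 n := by
  set g : ℕ → M := fun i => L i i + L 0 0 - L i 0 - L 0 i
  calc _ = ∑ i ∈ range n, (g (i + 1) - g i) := sum_congr rfl fun i _ => by simp only [g]; abel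
    _ = g n - g 0 := sum_range_sub g n
    _ = _ := by simp only [g]; abel

section PrefixInformation

variable {Ω 𝒳 𝒴 : Type*} [Fintype Ω] (p : Ω → ℝ) (hp0 : ∀ ω, 0 ≤ p ω)
  (X : Ω → ℕ → 𝒳) (Y : Ω → ℕ → 𝒴)
include hp0

lemma mutualInfo_prefixSeq_eq_sum_log (n : ℕ) :
    mutualInfo p (prefixSeq X n) (prefixSeq Y n) = ∑ ω, p ω *
      (log (jointPrefixPr p X Y n n ω) - log (jointPrefixPr p X Y n 0 ω) -
        log (jointPrefixPr p X Y 0 n ω)) := by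
  rw [mutualInfo_eq_sum_log p hp0]
  simp only [jointPrefixPr, eq_iff_true_of_subsingleton, and_true, true_and]

lemma condMutualInfo_delayed_eq_sum_log (i : ℕ) :
    condMutualInfo p (prefixSeq X i) (fun ω => Y ω i) (prefixSeq Y i) = ∑ ω, p ω *
      (log (jointPrefixPr p X Y i (i + 1) ω) + log (jointPrefixPr p X Y 0 i ω) -
        log (jointPrefixPr p X Y i i ω) - log (jointPrefixPr p X Y 0 (i + 1) ω)) := by
  rw [condMutualInfo_eq_sum_log p hp0]
  simp only [jointPrefixPr, prefixSeq_succ_eq_iff, eq_iff_true_of_subsingleton, true_and,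
    and_comm, and_left_comm]

lemma condMutualInfo_reverse_eq_sum_log (i : ℕ) :
    condMutualInfo p (prefixSeq Y i) (fun ω => X ω i) (prefixSeq X i) = ∑ ω, p ω *
      (log (jointPrefixPr p X Y (i + 1) i ω) + log (jointPrefixPr p X Y i 0 ω) -
        log (jointPrefixPr p X Y i i ω) - log (jointPrefixPr p X Y (i + 1) 0 ω)) := by
  simpa only [jointPrefixPr_swap p X Y] using condMutualInfo_delayed_eq_sum_log p hp0 Y X i

lemma condMutualInfo_instantaneous_eq_sum_log (i : ℕ) :
    condMutualInfo p (fun ω => X ω i) (fun ω => Y ω i)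
        (fun ω => (prefixSeq X i ω, prefixSeq Y i ω)) = ∑ ω, p ω *
      (log (jointPrefixPr p X Y (i + 1) (i + 1) ω) + log (jointPrefixPr p X Y i i ω) -
        log (jointPrefixPr p X Y (i + 1) i ω) - log (jointPrefixPr p X Y i (i + 1) ω)) := by
  rw [condMutualInfo_eq_sum_log p hp0]
  simp only [jointPrefixPr, prefixSeq_succ_eq_iff, Prod.mk.injEq, and_assoc, and_comm,
    and_left_comm]

end PrefixInformation

theorem mutualInfo_three_term_decomposition_general
    {Ω 𝒳 𝒴 : Type*} [Fintype Ω]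
    (p : Ω → ℝ) (hp0 : ∀ ω, 0 ≤ p ω) (hp1 : ∑ ω, p ω = 1)
    (X : Ω → ℕ → 𝒳) (Y : Ω → ℕ → 𝒴) (n : ℕ) :
    mutualInfo p (prefixSeq X n) (prefixSeq Y n) =
      (∑ i ∈ Finset.range n,
          condMutualInfo p (prefixSeq X i) (fun ω => Y ω i) (prefixSeq Y i)) +
        (∑ i ∈ Finset.range n,
          condMutualInfo p (prefixSeq Y i) (fun ω => X ω i) (prefixSeq X i)) +
        ∑ i ∈ Finset.range n,
          condMutualInfo p (fun ω => X ω i) (fun ω => Y ω i)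
            (fun ω => (prefixSeq X i ω, prefixSeq Y i ω)) := by
  simp only [mutualInfo_prefixSeq_eq_sum_log p hp0, condMutualInfo_delayed_eq_sum_log p hp0 X Y,
    condMutualInfo_reverse_eq_sum_log p hp0 X Y, condMutualInfo_instantaneous_eq_sum_log p hp0,
    ← sum_add_distrib, ← mul_add]
  rw [sum_comm]
  refine sum_congr rfl fun ω _ => ?_
  rw [← mul_sum, sum_range_staircase (fun j k => log (jointPrefixPr p X Y j k ω)),
    jointPrefixPr_zero_zero p X Y hp1, log_one, add_zero]

/-- three-term decomposition of mutual information: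
`I(X^n; Y^n) = I(DX^n→Y^n) + I(DY^n→X^n) + I(X^n→Y^n‖DX^n)`. -/
theorem mutualInfo_three_term_decomposition
    {Ω 𝒳 𝒴 : Type*} [Fintype Ω] [Fintype 𝒳] [Fintype 𝒴]
    (p : Ω → ℝ) (hp0 : ∀ ω, 0 ≤ p ω) (hp1 : ∑ ω, p ω = 1)
    (X : Ω → ℕ → 𝒳) (Y : Ω → ℕ → 𝒴) (n : ℕ) :
    mutualInfo p (prefixSeq X n) (prefixSeq Y n) =
      (∑ i ∈ Finset.range n,
          condMutualInfo p (prefixSeq X i) (fun ω => Y ω i) (prefixSeq Y i)) +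
        (∑ i ∈ Finset.range n,
          condMutualInfo p (prefixSeq Y i) (fun ω => X ω i) (prefixSeq X i)) +
        ∑ i ∈ Finset.range n,
          condMutualInfo p (fun ω => X ω i) (fun ω => Y ω i)
            (fun ω => (prefixSeq X i ω, prefixSeq Y i ω)) :=
  mutualInfo_three_term_decomposition_general p hp0 hp1 X Y n
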